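/- arXiv:1509.01401 — 3 statements merged into one kernel-verified Lean document; each statement's English description precedes it below -/
import Mathlib

section
/- Let $g$ be an entire function with $g(0)=0$, let $\lambda \in \mathbb{C} \setminus \{0\}$, and let $h$ be entire. Then the entire function $f(z) = h(0)e^{g(z)/\lambda} + e^{g(z)/\lambda}\int_0^z e^{-g(\zeta)/\lambda} h'(\zeta)\,d\zeta$ satisfies $f(z) - \frac{1}{\lambda}\int_0^z f(\zeta)g'(\zeta)\,d\zeta = h(z)$ for all $z \in \mathbb{C}$. -/
open Complex intervalIntegral

theorem stmt0 (g h : ℂ → ℂ) (hg : Differentiable ℂ g) (hh : Differentiable ℂ h)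
    (hg0 : g 0 = 0) (lam : ℂ) (hlam : lam ≠ 0)
    (f : ℂ → ℂ)
    (hf : ∀ z : ℂ, f z = h 0 * Complex.exp (g z / lam)
        + Complex.exp (g z / lam) *
          ∫ t in (0:ℝ)..1, Complex.exp (-(g ((t : ℂ) * z)) / lam) * deriv h ((t : ℂ) * z) * z) :
    ∀ z : ℂ,
      f z - (1 / lam) * ∫ t in (0:ℝ)..1, f ((t : ℂ) * z) * deriv g ((t : ℂ) * z) * z = h z := by
  -- continuity of derivatives
  have hga : AnalyticOnNhd ℂ g Set.univ := fun x _ => hg.analyticAt x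
  have hha : AnalyticOnNhd ℂ h Set.univ := fun x _ => hh.analyticAt x
  have hgd : Continuous (deriv g) :=
    (differentiableOn_univ.mp hga.deriv.differentiableOn).continuous
  have hhd : Continuous (deriv h) :=
    (differentiableOn_univ.mp hha.deriv.differentiableOn).continuous
  intro z
  set G : ℝ → ℂ := fun u => Complex.exp (-(g ((u:ℂ) * z)) / lam) * deriv h ((u:ℂ) * z) * z with hG
  have hGc : Continuous G := by
    apply Continuous.mul
    apply Continuous.mul
    · exact Complex.continuous_exp.comp
        (((hg.continuous.comp (Complex.continuous_ofReal.mul continuous_const)).neg).div_const lam)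
    · exact hhd.comp (Complex.continuous_ofReal.mul continuous_const)
    · exact continuous_const
  -- derivative of t ↦ g(t z) etc.
  have hlin : ∀ t : ℝ, HasDerivAt (fun s : ℝ => (s:ℂ) * z) z t := by
    intro t
    simpa using (HasDerivAt.comp_ofReal ((hasDerivAt_id ((t:ℝ):ℂ)).mul_const z))
  have hgt : ∀ t : ℝ, HasDerivAt (fun s : ℝ => g ((s:ℂ) * z)) (deriv g ((t:ℂ) * z) * z) t := by
    intro t
    have := ((hg ((t:ℂ) * z)).hasDerivAt.comp t (hlin t))
    exact this
  have hht : ∀ t : ℝ, HasDerivAt (fun s : ℝ => h ((s:ℂ) * z)) (deriv h ((t:ℂ) * z) * z) t := by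
    intro t
    have := ((hh ((t:ℂ) * z)).hasDerivAt.comp t (hlin t))
    exact this
  -- key formula : f(t z) in terms of primitive of G
  have key : ∀ t : ℝ, f ((t:ℂ) * z)
      = h 0 * Complex.exp (g ((t:ℂ) * z) / lam)
        + Complex.exp (g ((t:ℂ) * z) / lam) * ∫ u in (0:ℝ)..t, G u := by
    intro t
    rw [hf ((t:ℂ) * z)]
    congr 1
    congr 1
    have : (∫ s in (0:ℝ)..1, Complex.exp (-(g ((s:ℂ) * ((t:ℂ) * z))) / lam)
        * deriv h ((s:ℂ) * ((t:ℂ) * z)) * ((t:ℂ) * z))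
        = ∫ s in (0:ℝ)..1, (t:ℝ) • G (t * s) := by
      apply intervalIntegral.integral_congr
      intro s _
      push_cast [hG]
      ring_nf
      simp [mul_comm, mul_assoc, mul_left_comm]
    rw [this, intervalIntegral.integral_smul]
    have := intervalIntegral.smul_integral_comp_mul_left (a := (0:ℝ)) (b := 1) G t
    simpa using this
  set Φ : ℝ → ℂ := fun t => h 0 * Complex.exp (g ((t:ℂ) * z) / lam)
      + Complex.exp (g ((t:ℂ) * z) / lam) * ∫ u in (0:ℝ)..t, G u with hΦ
  have hΦd : ∀ t : ℝ, HasDerivAt Φ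
      (deriv g ((t:ℂ) * z) * z / lam * Φ t + deriv h ((t:ℂ) * z) * z) t := by
    intro t
    have hE : HasDerivAt (fun s : ℝ => Complex.exp (g ((s:ℂ) * z) / lam))
        (deriv g ((t:ℂ) * z) * z / lam * Complex.exp (g ((t:ℂ) * z) / lam)) t := by
      have := ((hgt t).div_const lam).cexp
      simpa [mul_comm] using this
    have hJ : HasDerivAt (fun s : ℝ => ∫ u in (0:ℝ)..s, G u) (G t) t := by
      exact intervalIntegral.integral_hasDerivAt_right (hGc.intervalIntegrable _ _)
        hGc.stronglyMeasurable.stronglyMeasurableAtFilter hGc.continuousAt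
    have := (hE.const_mul (h 0)).add (hE.mul hJ)
    refine this.congr_deriv ?_
    have hone : Complex.exp (g ((t:ℂ) * z) / lam) * Complex.exp (-(g ((t:ℂ) * z)) / lam) = 1 := by
      rw [← Complex.exp_add, neg_div, add_neg_cancel, Complex.exp_zero]
    have hEG : Complex.exp (g ((t:ℂ) * z) / lam) * G t = deriv h ((t:ℂ) * z) * z := by
      show Complex.exp (g ((t:ℂ) * z) / lam)
          * (Complex.exp (-(g ((t:ℂ) * z)) / lam) * deriv h ((t:ℂ) * z) * z)
        = deriv h ((t:ℂ) * z) * z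
      rw [← mul_assoc, ← mul_assoc, hone, one_mul]
    rw [← hEG]
    simp only [hΦ]
    ring
  -- Ψ = Φ - h(t z)
  have hΨd : ∀ t : ℝ, HasDerivAt (fun s : ℝ => Φ s - h ((s:ℂ) * z))
      (1 / lam * (f ((t:ℂ) * z) * deriv g ((t:ℂ) * z) * z)) t := by
    intro t
    have := (hΦd t).sub (hht t)
    have e : deriv g ((t:ℂ) * z) * z / lam * Φ t + deriv h ((t:ℂ) * z) * z
        - deriv h ((t:ℂ) * z) * z = 1 / lam * (f ((t:ℂ) * z) * deriv g ((t:ℂ) * z) * z) := by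
      rw [key t]
      simp only [hΦ]
      field_simp
      ring
    rw [← e]
    exact this
  have hΦc : Continuous Φ := by
    have : ∀ t, ContinuousAt Φ t := fun t => (hΦd t).continuousAt
    exact continuous_iff_continuousAt.mpr this
  have hInt : IntervalIntegrable
      (fun t : ℝ => 1 / lam * (f ((t:ℂ) * z) * deriv g ((t:ℂ) * z) * z)) MeasureTheory.volume 0 1 := by
    apply Continuous.intervalIntegrable
    have hfc : Continuous fun t : ℝ => f ((t:ℂ) * z) := by
      have : (fun t : ℝ => f ((t:ℂ) * z)) = Φ := funext fun t => by
        rw [key t]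
      rw [this]; exact hΦc
    exact continuous_const.mul ((hfc.mul
      (hgd.comp (Complex.continuous_ofReal.mul continuous_const))).mul continuous_const)
  have ftc := intervalIntegral.integral_eq_sub_of_hasDerivAt
      (f := fun s : ℝ => Φ s - h ((s:ℂ) * z)) (a := 0) (b := 1)
      (fun t _ => hΨd t) hInt
  rw [intervalIntegral.integral_const_mul] at ftc
  have hΦ1 : Φ 1 = f z := by
    simp only [hΦ]
    rw [← key 1]
    norm_num
  have hΦ0 : Φ 0 = h 0 := by
    simp only [hΦ]
    simp [hg0]
  rw [ftc, hΦ1, hΦ0]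
  norm_num
end

section
/- Let $\alpha > 0$, $p \geq 1$, $A$ a positive integer, and $b, \lambda \in \mathbb{C}$ with $\lambda \neq 0$ and $|b/\lambda| > \alpha$. Then $\int_{\mathbb{C}} e^{p\,\mathrm{Re}(b z^A/\lambda) - p\alpha |z|^A}\,dA(z) = \infty$; that is, the function $e^{bz^A/\lambda}$ does not belong to the Fock space $\mathcal{F}^p_{\alpha,A}$. -/
/-!
With `β = b / λ`, the integrand is `exp (p g)` for `g z = Re (β z ^ A) - α ‖z‖ ^ A`, which is
positively homogeneous of degree `A`. Taking `u ^ A = conj β` gives `g u = ‖β‖ (‖β‖ - α) > 0`, so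
`{g > 0}` is a nonempty open cone. A cone of positive Haar measure is mapped into itself by
`z ↦ 2 z`, which multiplies measures by `2 ^ dim > 1`, so its measure is infinite; on it the
integrand is at least `1`.
-/

open MeasureTheory Pointwise

theorem MeasureTheory.Measure.addHaar_eq_top_of_smul_subset {E : Type*} [NormedAddCommGroup E]
    [NormedSpace ℝ E] [MeasurableSpace E] [BorelSpace E] [FiniteDimensional ℝ E] [Nontrivial E]
    (μ : Measure E) [μ.IsAddHaarMeasure] {c : ℝ} (hc : 1 < c) {s : Set E} (hs : c • s ⊆ s)
    (hs₀ : μ s ≠ 0) : μ s = ⊤ := by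
  by_contra hs_top
  have hscale : ENNReal.ofReal |c ^ Module.finrank ℝ E| * μ s ≤ 1 * μ s := by
    rw [one_mul, ← Measure.addHaar_smul]
    exact measure_mono hs
  have hgt : 1 < c ^ Module.finrank ℝ E := one_lt_pow₀ hc Module.finrank_pos.ne'
  rw [ENNReal.mul_le_mul_iff_left hs₀ hs_top, abs_of_pos (by positivity),
    ENNReal.ofReal_le_one] at hscale
  linarith

noncomputable def fockExponent (β : ℂ) (α : ℝ) (A : ℕ) (z : ℂ) : ℝ :=
  (β * z ^ A).re - α * ‖z‖ ^ A

namespace fockExponent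

variable {β : ℂ} {α : ℝ} {A : ℕ}

theorem continuous : Continuous (fockExponent β α A) := by
  unfold fockExponent
  fun_prop

theorem smul {t : ℝ} (ht : 0 ≤ t) (z : ℂ) :
    fockExponent β α A (t • z) = t ^ A * fockExponent β α A z := by
  simp only [fockExponent, Complex.real_smul, mul_pow, norm_mul, Complex.norm_real,
    Real.norm_of_nonneg ht, ← Complex.ofReal_pow, mul_left_comm β, Complex.re_ofReal_mul]
  ring

theorem exists_pos (hα : 0 < α) (hβ : α < ‖β‖) (hA : 0 < A) : ∃ u, 0 < fockExponent β α A u := by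
  obtain ⟨u, hu⟩ := IsAlgClosed.exists_pow_nat_eq (starRingEnd ℂ β) hA
  refine ⟨u, ?_⟩
  have hnorm : ‖u‖ ^ A = ‖β‖ := by rw [← norm_pow, hu, Complex.norm_conj]
  have hre : (β * u ^ A).re = ‖β‖ ^ 2 := by
    rw [hu, Complex.mul_conj, Complex.ofReal_re, Complex.normSq_eq_norm_sq]
  rw [fockExponent, hre, hnorm]
  nlinarith

theorem volume_setOf_pos (hα : 0 < α) (hβ : α < ‖β‖) (hA : 0 < A) :
    volume {z | 0 < fockExponent β α A z} = ⊤ := by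
  refine Measure.addHaar_eq_top_of_smul_subset volume one_lt_two ?_ ?_
  · rw [Set.smul_set_subset_iff]
    intro z hz
    simp only [Set.mem_ofPred_eq, smul zero_le_two] at hz ⊢
    positivity
  · exact ((isOpen_lt continuous_const continuous).measure_pos volume
      (exists_pos hα hβ hA)).ne'

end fockExponent

theorem stmt2_general (p α : ℝ) (hp : 1 ≤ p) (hα : 0 < α) (A : ℕ) (hA : 0 < A)
    (b lam : ℂ) (hb : α < ‖b / lam‖) :
    ∫⁻ z : ℂ, ENNReal.ofReal
      (Real.exp (p * (b * z ^ A / lam).re - p * α * ‖z‖ ^ A)) = ⊤ := by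
  set f : ℂ → ENNReal := fun z ↦
    ENNReal.ofReal (Real.exp (p * (b * z ^ A / lam).re - p * α * ‖z‖ ^ A))
  have hf : ∀ z, f z = ENNReal.ofReal (Real.exp (p * fockExponent (b / lam) α A z)) := by
    intro z
    simp only [f, fockExponent, div_mul_eq_mul_div]
    ring_nf
  have hf_one : {z | 0 < fockExponent (b / lam) α A z} ⊆ {z | 1 ≤ f z} := by
    intro z hz
    simp only [Set.mem_ofPred_eq, hf, ENNReal.one_le_ofReal, Real.one_le_exp_iff] at hz ⊢
    exact mul_nonneg (by linarith) hz.le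
  have hf_meas : AEMeasurable f := by fun_prop
  rw [eq_top_iff, ← fockExponent.volume_setOf_pos hα hb hA]
  calc volume {z | 0 < fockExponent (b / lam) α A z}
      ≤ 1 * volume {z | 1 ≤ f z} := by rw [one_mul]; exact measure_mono hf_one
    _ ≤ ∫⁻ z, f z := mul_meas_ge_le_lintegral₀ hf_meas 1

theorem stmt2 (p α : ℝ) (hp : 1 ≤ p) (hα : 0 < α) (A : ℕ) (hA : 0 < A)
    (b lam : ℂ) (hlam : lam ≠ 0) (hb : α < ‖b / lam‖) :
    ∫⁻ z : ℂ, ENNReal.ofReal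
      (Real.exp (p * (b * z ^ A / lam).re - p * α * ‖z‖ ^ A)) = ⊤ :=
  stmt2_general p α hp hα A hA b lam hb
end

section
/- Let $X$ be a Banach space of entire functions containing the constant function $1$, on which all point evaluations $f \mapsto f(z_0)$ are bounded. Let $g$ be entire with $g(0)=0$ and suppose $T_g f(z) = \int_0^z f g'\,d\zeta$ defines a bounded operator on $X$. If $\lambda \neq 0$ is in the resolvent set of $T_g$, then $e^{g/\lambda} \in X$, and in fact $e^{g/\lambda} = (I - \frac{1}{\lambda}T_g)^{-1} 1$. -/
/-!
Restricted to a ray `s ↦ s z`, the equation `f - λ⁻¹ T_g f = 1` says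
`λ (f(sz) - 1) = ∫₀ˢ f(uz) g'(uz) z du`, so `φ(s) = f(sz)` solves the linear ODE
`λ φ' = φ · (d/ds) g(sz)` with `φ(0) = 1`, whose only solution is `φ(s) = exp(g(sz)/λ)`.
Invertibility of `λ - T_g` supplies a solution `f ∈ X` of the equation.
-/

open intervalIntegral Complex

theorem eq_mul_exp_sub_of_hasDerivAt {φ ψ ψ' : ℝ → ℂ}
    (hφ : ∀ s, HasDerivAt φ (φ s * ψ' s) s) (hψ : ∀ s, HasDerivAt ψ (ψ' s) s) (s : ℝ) :
    φ s = φ 0 * exp (ψ s - ψ 0) := by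
  have hderiv : ∀ s, HasDerivAt (fun s => φ s * exp (-ψ s)) 0 s := fun s =>
    ((hφ s).fun_mul (hψ s).fun_neg.cexp).congr_deriv (by ring)
  have hconst := is_const_of_deriv_eq_zero (fun s => (hderiv s).differentiableAt)
    (fun s => (hderiv s).deriv) s 0
  calc φ s = φ s * exp (-ψ s) * exp (ψ s) := by simp [mul_assoc, ← exp_add]
    _ = φ 0 * exp (ψ s - ψ 0) := by rw [hconst, mul_assoc, ← exp_add, neg_add_eq_sub]

theorem integral_radial_comp_mul (F : ℂ → ℂ) (z : ℂ) (s : ℝ) :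
    ∫ t in (0:ℝ)..1, F ((t : ℂ) * ((s : ℂ) * z)) * ((s : ℂ) * z)
      = ∫ u in (0:ℝ)..s, F ((u : ℂ) * z) * z := by
  have h := smul_integral_comp_mul_left (a := 0) (b := 1) (fun u : ℝ => F (u * z) * z) s
  rw [mul_zero, mul_one] at h
  rw [← h, ← integral_smul]
  refine integral_congr fun t _ => ?_
  simp only [real_smul, ofReal_mul]
  ring_nf

theorem hasDerivAt_integral_radial {F : ℂ → ℂ} (hF : Continuous F) (z : ℂ) (s : ℝ) :
    HasDerivAt (fun s : ℝ => ∫ t in (0:ℝ)..1, F ((t : ℂ) * ((s : ℂ) * z)) * ((s : ℂ) * z))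
      (F ((s : ℂ) * z) * z) s := by
  simp only [integral_radial_comp_mul]
  have hcont : Continuous (fun u : ℝ => F ((u : ℂ) * z) * z) := by fun_prop
  exact (hcont.integral_hasStrictDerivAt 0 s).hasDerivAt

theorem eq_exp_of_sub_inv_mul_integral_eq_one {f g : ℂ → ℂ} (hf : Continuous f)
    (hg : Differentiable ℂ g) (hg0 : g 0 = 0) {lam : ℂ}
    (hfe : ∀ z : ℂ, f z - lam⁻¹ * ∫ t in (0:ℝ)..1,
      f ((t : ℂ) * z) * deriv g ((t : ℂ) * z) * z = 1) (z : ℂ) :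
    f z = exp (g z / lam) := by
  set φ : ℝ → ℂ := fun s => f ((s : ℂ) * z)
  set ψ : ℝ → ℂ := fun s => g ((s : ℂ) * z) / lam
  have hφ_eq : φ = fun s : ℝ => 1 + lam⁻¹ * ∫ t in (0:ℝ)..1,
      (f * deriv g) ((t : ℂ) * ((s : ℂ) * z)) * ((s : ℂ) * z) := by
    funext s
    simp only [φ, Pi.mul_apply]
    linear_combination hfe ((s : ℂ) * z)
  have hφ : ∀ s : ℝ, HasDerivAt φ (φ s * (deriv g ((s : ℂ) * z) * z / lam)) s := fun s => by
    have h := ((hasDerivAt_integral_radial (hf.mul hg.deriv.continuous) z s).const_mul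
      lam⁻¹).const_add 1
    rw [← hφ_eq] at h
    refine h.congr_deriv ?_
    simp only [φ, Pi.mul_apply]
    ring
  have hψ : ∀ s : ℝ, HasDerivAt ψ (deriv g ((s : ℂ) * z) * z / lam) s := fun s => by
    have hray : HasDerivAt (fun s : ℝ => (s : ℂ) * z) z s := by
      simpa using (hasDerivAt_id ((s : ℝ) : ℂ)).comp_ofReal.mul_const z
    exact ((hg _).hasDerivAt.comp s hray).div_const lam
  have hf0 : f 0 = 1 := by simpa using hfe 0
  simpa [φ, ψ, hf0, hg0] using eq_mul_exp_sub_of_hasDerivAt hφ hψ 1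

theorem exists_sub_inv_smul_eq_of_mem_resolventSet {𝕜 X : Type*} [NontriviallyNormedField 𝕜]
    [NormedAddCommGroup X] [NormedSpace 𝕜 X] {T : X →L[𝕜] X} {lam : 𝕜} (hlam : lam ≠ 0)
    (hres : lam ∈ resolventSet 𝕜 T) (y : X) :
    ∃ x : X, x - lam⁻¹ • T x = y := by
  obtain ⟨u, hu⟩ := hres
  set x := (↑u⁻¹ : X →L[𝕜] X) (lam • y)
  have hx : (↑u : X →L[𝕜] X) x = lam • y := by
    change (↑u * ↑u⁻¹ : X →L[𝕜] X) (lam • y) = lam • y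
    rw [u.mul_inv]
    rfl
  rw [hu] at hx
  simp only [Algebra.algebraMap_eq_smul_one, sub_apply, smul_apply, one_apply_eq_self] at hx
  refine ⟨x, smul_right_injective X hlam ?_⟩
  show lam • (x - lam⁻¹ • T x) = lam • y
  rwa [smul_sub, smul_smul, mul_inv_cancel₀ hlam, one_smul]

theorem stmt16_general {X : Type*} [NormedAddCommGroup X] [NormedSpace ℂ X]
    (ι : X →ₗ[ℂ] (ℂ → ℂ))
    (hdiff : ∀ x : X, Differentiable ℂ (ι x))
    (one : X) (hone : ι one = fun _ => 1)
    (g : ℂ → ℂ) (hg : Differentiable ℂ g) (hg0 : g 0 = 0)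
    (T : X →L[ℂ] X)
    (hT : ∀ (x : X) (z : ℂ),
      ι (T x) z = ∫ t in (0:ℝ)..1, ι x ((t : ℂ) * z) * deriv g ((t : ℂ) * z) * z)
    (lam : ℂ) (hlam : lam ≠ 0) (hres : lam ∈ resolventSet ℂ T) :
    ∃ x : X, (∀ z : ℂ, ι x z = Complex.exp (g z / lam)) ∧ x - lam⁻¹ • T x = one := by
  obtain ⟨x, hx⟩ := exists_sub_inv_smul_eq_of_mem_resolventSet hlam hres one
  refine ⟨x, eq_exp_of_sub_inv_mul_integral_eq_one (hdiff x).continuous hg hg0 ?_, hx⟩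
  intro z
  simpa [← hT, hone] using congrFun (congrArg ι hx) z

theorem stmt16 {X : Type*} [NormedAddCommGroup X] [NormedSpace ℂ X] [CompleteSpace X]
    (ι : X →ₗ[ℂ] (ℂ → ℂ)) (hinj : Function.Injective ι)
    (hdiff : ∀ x : X, Differentiable ℂ (ι x))
    (heval : ∀ z : ℂ, ∃ C : ℝ, ∀ x : X, ‖ι x z‖ ≤ C * ‖x‖)
    (one : X) (hone : ι one = fun _ => 1)
    (g : ℂ → ℂ) (hg : Differentiable ℂ g) (hg0 : g 0 = 0)
    (T : X →L[ℂ] X)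
    (hT : ∀ (x : X) (z : ℂ),
      ι (T x) z = ∫ t in (0:ℝ)..1, ι x ((t : ℂ) * z) * deriv g ((t : ℂ) * z) * z)
    (lam : ℂ) (hlam : lam ≠ 0) (hres : lam ∈ resolventSet ℂ T) :
    ∃ x : X, (∀ z : ℂ, ι x z = Complex.exp (g z / lam)) ∧ x - lam⁻¹ • T x = one :=
  stmt16_general ι hdiff one hone g hg hg0 T hT lam hlam hres
end
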